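/- arXiv:1510.05382 — 3 statements merged into one kernel-verified Lean document; each statement's English description precedes it below -/
import Mathlib

section
/- Let p be an odd prime, K a field, and L/K a field extension with [L:K] = p. If ξ ∈ L is a root of unity whose order is a power of p, then ξ^p ∈ K. -/
/-!
If `ξ` already lies in `K` there is nothing to prove. Otherwise `K(ξ) = L`, since `[L : K] = p`
is prime, so `L/K` is cyclotomic, hence Galois with group of order `p`. Every automorphism `σ`
acts on `ξ`, of order `p ^ k`, by `ξ ↦ ξ ^ a`, and `σ ^ p = 1` gives `a ^ p ≡ 1 (mod p ^ k)`.
For odd `p`, lifting the exponent turns this into `a ≡ 1 (mod p ^ (k - 1))`, so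
`σ (ξ ^ p) = ξ ^ (a p) = ξ ^ p`: the element `ξ ^ p` is fixed by the Galois group.
-/

theorem Nat.ModEq.modEq_one_of_pow_prime {p k a : ℕ} (hp : p.Prime) (hodd : Odd p)
    (h : a ^ p ≡ 1 [MOD p ^ k]) : a ≡ 1 [MOD p ^ (k - 1)] := by
  have := Fact.mk hp
  rcases Nat.eq_zero_or_pos k with rfl | hk
  · exact Nat.modEq_one
  -- Fermat's little theorem puts `a` in the residue class of `1` mod `p`.
  have ha_mod_p : a ≡ 1 [MOD p] := by
    rw [← ZMod.natCast_eq_natCast_iff, ← ZMod.pow_card (a : ZMod p)]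
    exact_mod_cast (ZMod.natCast_eq_natCast_iff _ _ _).mpr (h.of_dvd (dvd_pow_self p hk.ne'))
  rcases lt_trichotomy a 1 with ha | rfl | ha
  · obtain rfl : a = 0 := by omega
    exact absurd (Nat.modEq_zero_iff_dvd.mp ha_mod_p.symm) hp.not_dvd_one
  · rfl
  have hdvd : p ∣ a - 1 := (Nat.modEq_iff_dvd' ha.le).mp ha_mod_p.symm
  have hlte : padicValNat p (a ^ p - 1) = padicValNat p (a - 1) + 1 := by
    simpa using padicValNat.pow_sub_pow hodd ha (by simpa using hdvd)
      (fun h ↦ hp.not_dvd_one (by simpa [Nat.sub_sub_self ha.le] using Nat.dvd_sub h hdvd))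
      hp.ne_zero
  have hk_le : k ≤ padicValNat p (a ^ p - 1) :=
    (padicValNat_dvd_iff_le (Nat.sub_pos_of_lt (Nat.one_lt_pow hp.ne_zero ha)).ne').mp
      ((Nat.modEq_iff_dvd' (Nat.one_le_pow _ _ (by omega))).mp h.symm)
  exact ((Nat.modEq_iff_dvd' ha.le).mpr ((padicValNat_dvd_iff_le (by omega)).mpr (by omega))).symm

theorem IsPrimitiveRoot.algEquiv_apply_pow_prime_of_pow_eq_one {K L : Type*} [CommRing K]
    [CommRing L] [IsDomain L] [Algebra K L] {p k : ℕ} (hp : p.Prime) (hodd : Odd p) {ξ : L}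
    (hξ : IsPrimitiveRoot ξ (p ^ k)) {σ : L ≃ₐ[K] L} (hσ : σ ^ p = 1) : σ (ξ ^ p) = ξ ^ p := by
  have : NeZero (p ^ k) := ⟨pow_ne_zero _ hp.ne_zero⟩
  set a := (hξ.autToPow K σ : ZMod (p ^ k)).val
  have ha : a ^ p ≡ 1 [MOD p ^ k] := by
    rw [← ZMod.natCast_eq_natCast_iff, Nat.cast_pow, ZMod.natCast_zmod_val,
      ← Units.val_pow_eq_pow_val, ← map_pow, hσ, map_one, Units.val_one, Nat.cast_one]
  have hap : a * p ≡ 1 * p [MOD p ^ k] :=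
    ((ha.modEq_one_of_pow_prime hp hodd).mul_right' p).of_dvd
      (by rw [← pow_succ]; exact pow_dvd_pow p (by omega))
  rw [map_pow, ← hξ.autToPow_spec K σ, ← pow_mul,
    (hξ.isOfFinOrder (NeZero.ne _)).pow_eq_pow_iff_modEq, ← hξ.eq_orderOf]
  rwa [one_mul] at hap

theorem IsPrimitiveRoot.isCyclotomicExtension_of_adjoin_eq_top {K L : Type*} [CommRing K]
    [CommRing L] [Algebra K L] {n : ℕ} [NeZero n] {ζ : L} (hζ : IsPrimitiveRoot ζ n)
    (h : Algebra.adjoin K {ζ} = ⊤) : IsCyclotomicExtension {n} K L := by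
  refine (IsCyclotomicExtension.iff_singleton n K L).mpr ⟨⟨ζ, hζ⟩, fun x ↦ ?_⟩
  have hx : x ∈ Algebra.adjoin K {ζ} := by simp [h]
  have hs : ({ζ} : Set L) ⊆ {b : L | b ^ n = 1} := Set.singleton_subset_iff.mpr hζ.pow_eq_one
  exact Algebra.adjoin_mono hs hx

/-- Let `p` be an odd prime, `K` a field, and `L/K` a field extension with `[L:K] = p`.
If `ξ ∈ L` is a root of unity whose order is a power of `p`, then `ξ^p ∈ K`. -/
theorem pow_p_mem_base_of_pPower_rootOfUnity
    (p : ℕ) (hp : p.Prime) (hodd : Odd p)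
    (K L : Type*) [Field K] [Field L] [Algebra K L]
    (hdim : Module.finrank K L = p)
    (ξ : L) (n : ℕ) (hξ : ξ ^ p ^ n = 1) :
    ξ ^ p ∈ (algebraMap K L).range := by
  have : FiniteDimensional K L := .of_finrank_pos (hdim ▸ hp.pos)
  obtain ⟨k, -, hk⟩ := (Nat.dvd_prime_pow hp).mp (orderOf_dvd_of_pow_eq_one hξ)
  have hprim : IsPrimitiveRoot ξ (p ^ k) := hk ▸ IsPrimitiveRoot.orderOf ξ
  rcases (Subalgebra.isSimpleOrder_of_finrank_prime K L (hdim ▸ hp)).eq_bot_or_eq_top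
    (Algebra.adjoin K {ξ}) with hbot | htop
  · obtain ⟨x, hx⟩ := Algebra.mem_bot.mp (hbot ▸ Algebra.self_mem_adjoin_singleton K ξ)
    exact ⟨x ^ p, by rw [map_pow, hx]⟩
  have : NeZero (p ^ k) := ⟨pow_ne_zero _ hp.ne_zero⟩
  have := hprim.isCyclotomicExtension_of_adjoin_eq_top htop
  have := IsCyclotomicExtension.isGalois {p ^ k} K L
  have hσ (σ : L ≃ₐ[K] L) : σ ^ p = 1 := by
    rw [← hdim, ← IsGalois.card_aut_eq_finrank]
    exact pow_card_eq_one'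
  exact (IsGalois.mem_range_algebraMap_iff_fixed _).mpr fun σ ↦
    hprim.algEquiv_apply_pow_prime_of_pow_eq_one hp hodd (hσ σ)
end

section
/- Let p be an odd prime, let L/K be a Galois extension of number fields with G = Gal(L/K) cyclic of order p generated by s, and let ζ ∈ L be a root of unity of order p^{n+1} with n ≥ 1 such that ζ ∉ K and ζ generates μ_{p^∞}(L). Then ζ·s(ζ)^{-1} is a root of unity of order exactly p lying in K, and the set {η·s(η)^{-1} : η ∈ μ_{p^∞}(L)} equals the group μ_p(K) of p-th roots of unity of K. -/
/-!
Write `s ζ = ζ ^ a`. Since `s ^ p = 1`, `a ^ p ≡ 1 [MOD p ^ (n + 1)]`, and lifting the exponent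
(`p` odd) gives `a ≡ 1 [MOD p ^ n]`, so `y := s ζ / ζ = ζ ^ (p ^ n * c)` satisfies `y ^ p = 1`.
As `n ≥ 1`, `s y = y ^ a = y`, so `y ∈ K`, and `y ≠ 1` because `ζ ∉ K`. Thus `ζ / s ζ = y⁻¹`
generates the group of `p`-th roots of unity of `L`, all of which lie in `K`; and
`η ↦ η / s η` sends `ζ ^ k` to `(ζ / s ζ) ^ k`.
-/

theorem Int.pow_dvd_sub_one_of_pow_succ_dvd_pow_sub_one {p : ℕ} (hp : p.Prime) (hodd : Odd p)
    {n : ℕ} {a : ℤ} (h : (p : ℤ) ^ (n + 1) ∣ a ^ p - 1) : (p : ℤ) ^ n ∣ a - 1 := by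
  have hpZ : Prime (p : ℤ) := Nat.prime_iff_prime_int.mp hp
  have hfermat : (p : ℤ) ∣ a - 1 := by
    simpa using dvd_sub ((dvd_pow_self _ n.succ_ne_zero).trans h) (Int.prime_dvd_pow_self_sub hp a)
  have hndvd : ¬ (p : ℤ) ∣ a := fun ha ↦ hpZ.not_dvd_one (by simpa using dvd_sub ha hfermat)
  have lte := emultiplicity_pow_prime_sub_pow_prime (y := 1) hpZ hodd hfermat hndvd
  rw [one_pow] at lte
  rw [pow_dvd_iff_le_emultiplicity, lte, Nat.cast_succ] at h
  exact pow_dvd_of_le_emultiplicity ((ENat.add_le_add_iff_right ENat.one_ne_top).mp h)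

theorem exists_pow_eq_mul_pow_of_pow_prime_eq_self {M : Type*} [Monoid M] {p : ℕ} (hp : p.Prime)
    (hodd : Odd p) {n : ℕ} (hn : 1 ≤ n) {ζ : M} (hord : orderOf ζ = p ^ (n + 1)) {a : ℕ}
    (ha : ζ ^ a ^ p = ζ) : ∃ c, ζ ^ a = ζ * ζ ^ (p ^ n * c) := by
  have hfin : IsOfFinOrder ζ := orderOf_pos_iff.mp (hord ▸ pow_pos hp.pos _)
  have hmod : 1 ≡ a ^ p [MOD p ^ (n + 1)] :=
    (hord ▸ hfin.pow_eq_pow_iff_modEq.mp (by rwa [pow_one])).symm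
  have hdvd : (p : ℤ) ^ n ∣ a - 1 := Int.pow_dvd_sub_one_of_pow_succ_dvd_pow_sub_one hp hodd <| by
    simpa using Nat.modEq_iff_dvd.mp hmod
  have hamod : 1 ≡ a [MOD p ^ n] := Nat.modEq_iff_dvd.mpr (by exact_mod_cast hdvd)
  rw [Nat.ModEq, Nat.mod_eq_of_lt (Nat.one_lt_pow (by omega) hp.one_lt)] at hamod
  refine ⟨a / p ^ n, ?_⟩
  conv_lhs => rw [← Nat.div_add_mod a (p ^ n), ← hamod, pow_succ']

theorem AlgEquiv.pow_apply_eq_pow_pow {K L : Type*} [CommSemiring K] [Semiring L] [Algebra K L]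
    (s : L ≃ₐ[K] L) {ζ : L} {a : ℕ} (h : s ζ = ζ ^ a) (k : ℕ) : (s ^ k) ζ = ζ ^ a ^ k := by
  induction k with
  | zero => simp
  | succ k ih => rw [pow_succ', AlgEquiv.mul_apply, ih, map_pow, h, ← pow_mul, ← pow_succ']

theorem mem_range_algebraMap_of_apply_eq_self {K L : Type*} [Field K] [Field L] [Algebra K L]
    [FiniteDimensional K L] [IsGalois K L] {s : L ≃ₐ[K] L}
    (hs : ∀ g : L ≃ₐ[K] L, g ∈ Subgroup.zpowers s) {x : L} (hx : s x = x) :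
    x ∈ (algebraMap K L).range :=
  (IsGalois.mem_range_algebraMap_iff_fixed x).mpr fun g ↦ by
    obtain ⟨k, rfl⟩ := Subgroup.mem_zpowers_iff.mp (hs g)
    have hmem : s ∈ MulAction.stabilizer (L ≃ₐ[K] L) x := hx
    exact (MulAction.stabilizer _ x).zpow_mem hmem k

theorem AlgEquiv.exists_apply_eq_mul_of_pow_prime_eq_one {K L : Type*} [CommSemiring K]
    [CommSemiring L] [Algebra K L] {p : ℕ} (hp : p.Prime) (hodd : Odd p) {n : ℕ} (hn : 1 ≤ n)
    (s : L ≃ₐ[K] L) (hsp : s ^ p = 1) {ζ : L} (hord : orderOf ζ = p ^ (n + 1)) {a : ℕ}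
    (ha : s ζ = ζ ^ a) : ∃ y, s ζ = ζ * y ∧ y ^ p = 1 ∧ s y = y := by
  obtain ⟨c, hc⟩ := exists_pow_eq_mul_pow_of_pow_prime_eq_self hp hodd hn hord (a := a) <| by
    rw [← s.pow_apply_eq_pow_pow ha, hsp, AlgEquiv.one_apply]
  have hyp : (ζ ^ (p ^ n * c)) ^ p = 1 := by
    rw [← pow_mul, mul_right_comm, ← pow_succ, pow_mul, ← hord, pow_orderOf_eq_one, one_pow]
  have hpn : p ∣ p ^ n * c := (dvd_pow_self p (by omega)).mul_right c
  refine ⟨ζ ^ (p ^ n * c), ha.trans hc, hyp, ?_⟩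
  rw [map_pow, ha, hc, mul_pow,
    orderOf_dvd_iff_pow_eq_one.mp ((orderOf_dvd_of_pow_eq_one hyp).trans hpn), mul_one]

theorem image_mul_inv_apply_eq_of_orderOf_eq_prime {K L : Type*} [Field K] [Field L]
    [Algebra K L] {p : ℕ} (hp : p.Prime) (s : L ≃ₐ[K] L) {ζ : L} (hζ : ∃ m : ℕ, ζ ^ p ^ m = 1)
    (hgen : ∀ x : L, (∃ m : ℕ, x ^ p ^ m = 1) → ∃ k : ℕ, x = ζ ^ k)
    (hord : orderOf (ζ * (s ζ)⁻¹) = p) (hmem : ζ * (s ζ)⁻¹ ∈ (algebraMap K L).range) :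
    (fun η : L => η * (s η)⁻¹) '' {x : L | ∃ m : ℕ, x ^ p ^ m = 1} =
      {z : L | z ^ p = 1 ∧ z ∈ (algebraMap K L).range} := by
  have hpow : ∀ k : ℕ, ζ ^ k * (s (ζ ^ k))⁻¹ = (ζ * (s ζ)⁻¹) ^ k := fun k ↦ by
    rw [map_pow, ← inv_pow, mul_pow]
  ext z
  constructor
  · rintro ⟨η, hη, rfl⟩
    obtain ⟨k, rfl⟩ := hgen η hη
    simp only [Set.mem_ofPred_eq, hpow]
    exact ⟨by rw [pow_right_comm, ← hord, pow_orderOf_eq_one, one_pow], pow_mem hmem k⟩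
  · rintro ⟨hz, -⟩
    have : NeZero p := ⟨hp.ne_zero⟩
    obtain ⟨i, -, rfl⟩ := (IsPrimitiveRoot.iff_orderOf.mpr hord).eq_pow_of_pow_eq_one hz
    obtain ⟨m, hm⟩ := hζ
    exact ⟨ζ ^ i, ⟨m, by rw [pow_right_comm, hm, one_pow]⟩, hpow i⟩

theorem crossedHomomorphism_image_eq_muP_general
    (p : ℕ) (hp : p.Prime) (hodd : Odd p)
    (K L : Type*) [Field K] [Field L] [Algebra K L]
    [IsGalois K L] (hdim : Module.finrank K L = p)
    (s : L ≃ₐ[K] L) (hs : ∀ g : L ≃ₐ[K] L, g ∈ Subgroup.zpowers s)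
    (ζ : L) (n : ℕ) (hn : 1 ≤ n) (hord : orderOf ζ = p ^ (n + 1))
    (hζK : ζ ∉ (algebraMap K L).range)
    (hgen : ∀ x : L, (∃ m : ℕ, x ^ p ^ m = 1) → ∃ k : ℕ, x = ζ ^ k) :
    (orderOf (ζ * (s ζ)⁻¹) = p ∧ ζ * (s ζ)⁻¹ ∈ (algebraMap K L).range) ∧
      (fun η : L => η * (s η)⁻¹) '' {x : L | ∃ m : ℕ, x ^ p ^ m = 1} =
        {z : L | z ^ p = 1 ∧ z ∈ (algebraMap K L).range} := by
  have : FiniteDimensional K L := .of_finrank_pos (hdim ▸ hp.pos)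
  have hsp : s ^ p = 1 := hdim ▸ IsGalois.card_aut_eq_finrank K L ▸ pow_card_eq_one'
  have hζp : ζ ^ p ^ (n + 1) = 1 := hord ▸ pow_orderOf_eq_one ζ
  obtain ⟨a, ha⟩ := hgen (s ζ) ⟨n + 1, by rw [← map_pow, hζp, map_one]⟩
  obtain ⟨y, hsζ, hyp, hsy⟩ := s.exists_apply_eq_mul_of_pow_prime_eq_one hp hodd hn hsp hord ha
  have hy1 : y ≠ 1 := by
    rintro rfl
    exact hζK (mem_range_algebraMap_of_apply_eq_self hs (by rw [hsζ, mul_one]))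
  have hζ0 : ζ ≠ 0 := fun h ↦ by simp [h, hp.ne_zero] at hζp
  have hx : ζ * (s ζ)⁻¹ = y⁻¹ := by rw [hsζ, mul_inv, ← mul_assoc, mul_inv_cancel₀ hζ0, one_mul]
  have : Fact p.Prime := ⟨hp⟩
  have hxord : orderOf (ζ * (s ζ)⁻¹) = p :=
    orderOf_eq_prime (by rw [hx, inv_pow, hyp, inv_one]) (by rwa [hx, Ne, inv_eq_one])
  have hxK : ζ * (s ζ)⁻¹ ∈ (algebraMap K L).range :=
    mem_range_algebraMap_of_apply_eq_self hs (by rw [hx, map_inv₀, hsy])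
  exact ⟨⟨hxord, hxK⟩,
    image_mul_inv_apply_eq_of_orderOf_eq_prime hp s ⟨n + 1, hζp⟩ hgen hxord hxK⟩

/-- Let `p` be an odd prime, `L/K` Galois of number fields with Galois group cyclic of order
`p` generated by `s`, and `ζ ∈ L` a root of unity of order `p^(n+1)`, `n ≥ 1`, with `ζ ∉ K`,
generating `μ_{p^∞}(L)`.  Then `ζ·s(ζ)⁻¹` is a root of unity of order exactly `p` lying in
`K`, and `{η·s(η)⁻¹ : η ∈ μ_{p^∞}(L)}` equals the group `μ_p(K)` of `p`-th roots of unity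
of `K` (viewed inside `L`). -/
theorem crossedHomomorphism_image_eq_muP
    (p : ℕ) (hp : p.Prime) (hodd : Odd p)
    (K L : Type*) [Field K] [NumberField K] [Field L] [NumberField L] [Algebra K L]
    [IsGalois K L] (hdim : Module.finrank K L = p)
    (s : L ≃ₐ[K] L) (hs : ∀ g : L ≃ₐ[K] L, g ∈ Subgroup.zpowers s)
    (ζ : L) (n : ℕ) (hn : 1 ≤ n) (hord : orderOf ζ = p ^ (n + 1))
    (hζK : ζ ∉ (algebraMap K L).range)
    (hgen : ∀ x : L, (∃ m : ℕ, x ^ p ^ m = 1) → ∃ k : ℕ, x = ζ ^ k) :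
    (orderOf (ζ * (s ζ)⁻¹) = p ∧ ζ * (s ζ)⁻¹ ∈ (algebraMap K L).range) ∧
      (fun η : L => η * (s η)⁻¹) '' {x : L | ∃ m : ℕ, x ^ p ^ m = 1} =
        {z : L | z ^ p = 1 ∧ z ∈ (algebraMap K L).range} :=
  crossedHomomorphism_image_eq_muP_general p hp hodd K L hdim s hs ζ n hn hord hζK hgen
end

section
/- Let p be an odd prime and let L/K be a Galois extension of number fields with G = Gal(L/K) cyclic of order p generated by s. Suppose there exists ζ ∈ μ_{p^∞}(L) with ζ ∉ K which generates μ_{p^∞}(L) (equivalently μ_{p^∞}(K) = μ_{p^∞}(L)^p ≠ 1). Then every ξ ∈ μ_{p^∞}(L) with N_{L/K}(ξ) = 1 can be written ξ = η·s(η)^{-1} for some η ∈ μ_{p^∞}(L); that is, H^1(G, μ_{p^∞}(L)) = 0. -/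
/-!
Write `μ_{p^∞}(L) = ⟨ζ⟩ ≅ ℤ/p^n` and `s ζ = ζ ^ a`. Then `a^p ≡ 1` but `a ≢ 1 (mod p^n)`, and
the statement becomes: if `p^n ∣ k (1 + a + ⋯ + a^{p-1})` then `k ≡ j (1 - a) (mod p^n)` for some
`j`. By Fermat `p ∣ a - 1`, so lifting the exponent (for odd `p`) shows that
`1 + a + ⋯ + a^{p-1}` has `p`-adic valuation exactly `1`. Hence `a - 1` has valuation exactly
`n - 1` and `p^{n-1} ∣ k`, which gives `j`.
-/

open Finset

theorem dvd_sub_one_of_dvd_pow_sub_one {p : ℕ} (hp : p.Prime) {a : ℤ}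
    (h : (p : ℤ) ∣ a ^ p - 1) : (p : ℤ) ∣ a - 1 := by
  have := Fact.mk hp
  rw [← ZMod.intCast_zmod_eq_zero_iff_dvd] at h ⊢
  simpa [ZMod.pow_card] using h

theorem pow_dvd_of_pow_succ_dvd_mul_geom_sum {p m : ℕ} (hp : p.Prime) (hodd : Odd p) {a x : ℤ}
    (ha : (p : ℤ) ∣ a - 1) (h : (p : ℤ) ^ (m + 1) ∣ x * ∑ i ∈ range p, a ^ i) :
    (p : ℤ) ^ m ∣ x := by
  have hpZ : Prime (p : ℤ) := Nat.prime_iff_prime_int.1 hp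
  have hpa : ¬ (p : ℤ) ∣ a := fun hpa =>
    hpZ.not_dvd_one (by simpa using dvd_sub hpa ha)
  have hmult := emultiplicity_geom_sum₂_eq_one hpZ hodd (by simpa using ha) hpa
  simp only [one_pow, mul_one] at hmult
  obtain ⟨⟨w, hw⟩, hp2⟩ := emultiplicity_eq_coe.1 hmult
  rw [pow_one] at hw
  have hpw : ¬ (p : ℤ) ∣ w := fun ⟨c, hc⟩ => hp2 ⟨c, by rw [hw, hc]; ring⟩
  rw [hw, pow_succ', mul_left_comm, mul_dvd_mul_iff_left hpZ.ne_zero] at h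
  exact ((hpZ.coprime_iff_not_dvd.2 hpw).pow_left).dvd_of_dvd_mul_right h

theorem exists_modEq_mul_one_sub_of_mul_geom_sum_modEq_zero {p n : ℕ} (hp : p.Prime)
    (hodd : Odd p) {a k : ℤ} (hap : a ^ p ≡ 1 [ZMOD p ^ n]) (ha : ¬ a ≡ 1 [ZMOD p ^ n])
    (hk : k * ∑ i ∈ range p, a ^ i ≡ 0 [ZMOD p ^ n]) :
    ∃ j, k ≡ j * (1 - a) [ZMOD p ^ n] := by
  obtain ⟨m, rfl⟩ : ∃ m, n = m + 1 :=
    Nat.exists_eq_succ_of_ne_zero fun h => ha (by simp [h, Int.modEq_one])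
  have hpZ : Prime (p : ℤ) := Nat.prime_iff_prime_int.1 hp
  have hap' : (p : ℤ) ^ (m + 1) ∣ (a - 1) * ∑ i ∈ range p, a ^ i := by
    rw [mul_comm, geom_sum_mul]; exact hap.symm.dvd
  have hpa : (p : ℤ) ∣ a - 1 :=
    dvd_sub_one_of_dvd_pow_sub_one hp ((dvd_pow_self _ m.succ_ne_zero).trans hap.symm.dvd)
  obtain ⟨u, hu⟩ := pow_dvd_of_pow_succ_dvd_mul_geom_sum hp hodd hpa hap'
  obtain ⟨k₁, rfl⟩ := pow_dvd_of_pow_succ_dvd_mul_geom_sum hp hodd hpa (Int.modEq_zero_iff_dvd.1 hk)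
  have hpu : ¬ (p : ℤ) ∣ u := fun ⟨c, hc⟩ =>
    ha (Int.modEq_iff_dvd.2 ⟨-c, by rw [← neg_sub, hu, hc]; ring⟩)
  -- `x` inverts `u` modulo `p`, so `j = -k₁ x` works
  obtain ⟨x, y, hxy⟩ := (hpZ.coprime_iff_not_dvd.2 hpu).symm
  refine ⟨-k₁ * x, Int.modEq_iff_dvd.2 ⟨-k₁ * y, ?_⟩⟩
  linear_combination ((p : ℤ) ^ m * k₁) * hxy + k₁ * x * hu

theorem zpow_eq_zpow_iff_modEq₀ {G₀ : Type*} [GroupWithZero G₀] {x : G₀} (hx : x ≠ 0)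
    {m n : ℤ} : x ^ m = x ^ n ↔ m ≡ n [ZMOD orderOf x] := by
  rw [← Units.val_mk0 hx, orderOf_units, ← Units.val_zpow_eq_zpow_val,
    ← Units.val_zpow_eq_zpow_val, Units.val_inj, zpow_eq_zpow_iff_modEq]

theorem pow_eq_pow_iff_intModEq₀ {G₀ : Type*} [GroupWithZero G₀] {x : G₀} (hx : x ≠ 0)
    {m n : ℕ} : x ^ m = x ^ n ↔ (m : ℤ) ≡ n [ZMOD orderOf x] := by
  rw [← zpow_natCast, ← zpow_natCast, zpow_eq_zpow_iff_modEq₀ hx]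

section FieldAutomorphism

variable {K L : Type*} [Field K] [Field L] [Algebra K L] {s : L ≃ₐ[K] L} {ζ : L} {a : ℕ}

theorem AlgEquiv.pow_apply_pow_of_apply_eq_pow (ha : s ζ = ζ ^ a) (i k : ℕ) :
    (s ^ i) (ζ ^ k) = ζ ^ (k * a ^ i) := by
  induction i with
  | zero => simp
  | succ i ih => rw [pow_succ', AlgEquiv.mul_apply, ih, map_pow, ha, ← pow_mul, pow_succ']; ring_nf

theorem AlgEquiv.pow_orderOf_modEq_one_of_apply_eq_pow (hζ : ζ ≠ 0) (ha : s ζ = ζ ^ a) :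
    (a : ℤ) ^ orderOf s ≡ 1 [ZMOD orderOf ζ] := by
  have h := s.pow_apply_pow_of_apply_eq_pow ha (orderOf s) 1
  rw [pow_orderOf_eq_one, AlgEquiv.one_apply, one_mul, pow_one] at h
  simpa using (pow_eq_pow_iff_intModEq₀ hζ).1 (h.symm.trans (pow_one ζ).symm)

end FieldAutomorphism

section CyclicGalois

variable {K L : Type*} [Field K] [Field L] [Algebra K L] [FiniteDimensional K L] [IsGalois K L]
  {s : L ≃ₐ[K] L} {ζ : L} {a : ℕ}

theorem algebraMap_norm_eq_prod_range_orderOf (hs : ∀ g, g ∈ Subgroup.zpowers s) (x : L) :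
    algebraMap K L (Algebra.norm K x) = ∏ i ∈ range (orderOf s), (s ^ i) x := by
  classical
  rw [Algebra.norm_eq_prod_automorphisms, ← IsCyclic.image_range_orderOf hs,
    prod_image fun i hi j hj h => pow_injOn_Iio_orderOf (by simpa using hi) (by simpa using hj) h]

theorem mem_range_algebraMap_of_apply_eq (hs : ∀ g, g ∈ Subgroup.zpowers s) {x : L}
    (hx : s x = x) : x ∈ Set.range (algebraMap K L) :=
  (IsGalois.mem_range_algebraMap_iff_fixed x).2 fun g =>
    (Subgroup.zpowers_le.2 (MulAction.mem_stabilizer_iff.2 hx) (hs g) : g • x = x)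

theorem not_modEq_one_of_apply_eq_pow (hs : ∀ g, g ∈ Subgroup.zpowers s)
    (hζK : ζ ∉ Set.range (algebraMap K L)) (hζ : ζ ≠ 0) (ha : s ζ = ζ ^ a) :
    ¬ (a : ℤ) ≡ 1 [ZMOD orderOf ζ] := fun h => hζK <|
  mem_range_algebraMap_of_apply_eq hs <| by
    rw [ha, (pow_eq_pow_iff_intModEq₀ hζ (n := 1)).2 (by simpa using h), pow_one]

theorem mul_geom_sum_modEq_zero_of_norm_pow_eq_one (hs : ∀ g, g ∈ Subgroup.zpowers s)
    (hζ : ζ ≠ 0) (ha : s ζ = ζ ^ a) {k : ℕ} (hk : Algebra.norm K (ζ ^ k) = 1) :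
    (k : ℤ) * ∑ i ∈ range (orderOf s), (a : ℤ) ^ i ≡ 0 [ZMOD orderOf ζ] := by
  have h := algebraMap_norm_eq_prod_range_orderOf hs (ζ ^ k)
  simp_rw [hk, map_one, s.pow_apply_pow_of_apply_eq_pow ha, prod_pow_eq_pow_sum, ← mul_sum] at h
  simpa using (pow_eq_pow_iff_intModEq₀ hζ).1 (h.symm.trans (pow_zero ζ).symm)

end CyclicGalois

theorem h1_muPInfinity_trivial_of_globally_cyclotomic_general
    (p : ℕ) (hp : p.Prime) (hodd : Odd p)
    (K L : Type*) [Field K] [Field L] [Algebra K L]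
    [IsGalois K L] (hdim : Module.finrank K L = p)
    (s : L ≃ₐ[K] L) (hs : ∀ g : L ≃ₐ[K] L, g ∈ Subgroup.zpowers s)
    (ζ : L) (hζ : ∃ m : ℕ, ζ ^ p ^ m = 1)
    (hζK : ζ ∉ (algebraMap K L).range)
    (hgen : ∀ x : L, (∃ m : ℕ, x ^ p ^ m = 1) → ∃ k : ℕ, x = ζ ^ k) :
    ∀ ξ : L, (∃ m : ℕ, ξ ^ p ^ m = 1) → Algebra.norm K ξ = 1 →
      ∃ η : L, (∃ m : ℕ, η ^ p ^ m = 1) ∧ ξ = η * (s η)⁻¹ := by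
  intro ξ hξ hnorm
  have : FiniteDimensional K L := Module.finite_of_finrank_pos (hdim ▸ hp.pos)
  have hs_order : orderOf s = p := by
    rw [orderOf_eq_card_of_forall_mem_zpowers hs, IsGalois.card_aut_eq_finrank, hdim]
  obtain ⟨m, hm⟩ := hζ
  have hζ0 : ζ ≠ 0 := by rintro rfl; simp [hp.ne_zero] at hm
  obtain ⟨n, -, hn⟩ := (Nat.dvd_prime_pow hp).1 (orderOf_dvd_of_pow_eq_one hm)
  have hζ_order : (orderOf ζ : ℤ) = p ^ n := by rw [hn, Nat.cast_pow]
  obtain ⟨a, ha⟩ := hgen (s ζ) ⟨m, by rw [← map_pow, hm, map_one]⟩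
  obtain ⟨k, rfl⟩ := hgen ξ hξ
  have hap := s.pow_orderOf_modEq_one_of_apply_eq_pow hζ0 ha
  have ha1 := not_modEq_one_of_apply_eq_pow hs hζK hζ0 ha
  have hk := mul_geom_sum_modEq_zero_of_norm_pow_eq_one hs hζ0 ha hnorm
  rw [hs_order, hζ_order] at hap hk
  rw [hζ_order] at ha1
  obtain ⟨j, hj⟩ := exists_modEq_mul_one_sub_of_mul_geom_sum_modEq_zero hp hodd hap ha1 hk
  refine ⟨ζ ^ j, ⟨m, by rw [← zpow_natCast, ← zpow_mul, mul_comm, zpow_mul, zpow_natCast, hm,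
    one_zpow]⟩, ?_⟩
  rw [map_zpow₀, ha, ← zpow_natCast ζ a, ← zpow_mul, ← zpow_neg, ← zpow_add₀ hζ0,
    ← zpow_natCast, zpow_eq_zpow_iff_modEq₀ hζ0, hζ_order]
  convert hj using 1
  ring

/-- Let `p` be an odd prime and `L/K` Galois of number fields with Galois group cyclic of
order `p` generated by `s`.  Suppose there exists `ζ ∈ μ_{p^∞}(L)` with `ζ ∉ K` which
generates `μ_{p^∞}(L)`.  Then every `ξ ∈ μ_{p^∞}(L)` with `N_{L/K}(ξ) = 1` can be written
`ξ = η·s(η)⁻¹` with `η ∈ μ_{p^∞}(L)`; that is, `H¹(G, μ_{p^∞}(L)) = 0`. -/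
theorem h1_muPInfinity_trivial_of_globally_cyclotomic
    (p : ℕ) (hp : p.Prime) (hodd : Odd p)
    (K L : Type*) [Field K] [NumberField K] [Field L] [NumberField L] [Algebra K L]
    [IsGalois K L] (hdim : Module.finrank K L = p)
    (s : L ≃ₐ[K] L) (hs : ∀ g : L ≃ₐ[K] L, g ∈ Subgroup.zpowers s)
    (ζ : L) (hζ : ∃ m : ℕ, ζ ^ p ^ m = 1)
    (hζK : ζ ∉ (algebraMap K L).range)
    (hgen : ∀ x : L, (∃ m : ℕ, x ^ p ^ m = 1) → ∃ k : ℕ, x = ζ ^ k) :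
    ∀ ξ : L, (∃ m : ℕ, ξ ^ p ^ m = 1) → Algebra.norm K ξ = 1 →
      ∃ η : L, (∃ m : ℕ, η ^ p ^ m = 1) ∧ ξ = η * (s η)⁻¹ :=
  h1_muPInfinity_trivial_of_globally_cyclotomic_general p hp hodd K L hdim s hs ζ hζ hζK hgen
end
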